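/- Let k be a positive natural number and let G be a finite simple graph on at least k + 2 vertices that is k-connected. Let v be a vertex of G. If for every pair of distinct vertices x, y in the neighborhood Γ_v of v there exist at least k pairwise internally disjoint x–y paths in the vertex-deleted graph G − v, then G − v is k-connected. (Paper's Lemma 1.) -/

import Mathlib

open SimpleGraph

/-- Two walks from `x` to `y` are internally disjoint if every common vertex
of their supports is `x` or `y`. -/
def InternallyDisjoint {V : Type*} (G : SimpleGraph V) {x y : V}
    (p q : G.Walk x y) : Prop :=
  ∀ u, u ∈ p.support → u ∈ q.support → u = x ∨ u = y

/-- `G` contains a family of `n` (distinct) pairwise internally disjoint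
paths from `x` to `y`. -/
def HasIDPathFamily {V : Type*} (G : SimpleGraph V) (x y : V) (n : ℕ) : Prop :=
  ∃ P : Fin n → G.Walk x y, Function.Injective P ∧ (∀ i, (P i).IsPath) ∧
    ∀ i j, i ≠ j → InternallyDisjoint G (P i) (P j)

/-- `G` is `k`-connected: `G` has more than `k` vertices and deleting any
set of fewer than `k` vertices leaves a connected graph. -/
def KConn {V : Type*} (G : SimpleGraph V) (k : ℕ) : Prop :=
  k < Nat.card V ∧
    ∀ S : Set V, S.Finite → S.ncard < k → (G.induce Sᶜ).Connected

private def outHom {V : Type*} (H : SimpleGraph V) (A : Set V) : H.induce A →g H :=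
  ⟨Subtype.val, fun {a b} h => h⟩

private lemma walk_induce {V : Type*} {H : SimpleGraph V} {A : Set V} :
    ∀ {a b : V} (p : H.Walk a b) (ha : a ∈ A) (hb : b ∈ A),
    (∀ u ∈ p.support, u ∈ A) →
    ∃ q : (H.induce A).Walk ⟨a, ha⟩ ⟨b, hb⟩, ∀ u ∈ q.support, (u : V) ∈ p.support := by
  intro a b p
  induction p with
  | nil =>
    intro ha hb hp
    exact ⟨Walk.nil, by simp⟩
  | @cons a c b hac p ih =>
    intro ha hb hp
    have hc : c ∈ A := hp c (by simp)
    obtain ⟨q, hq⟩ := ih hc hb (fun u hu => hp u (by simp [hu]))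
    refine ⟨Walk.cons (show (H.induce A).Adj ⟨a, ha⟩ ⟨c, hc⟩ from hac) q, ?_⟩
    intro u hu
    rw [Walk.support_cons] at hu
    rw [Walk.support_cons]
    rcases List.mem_cons.1 hu with h1 | h2
    · simp [h1]
    · exact List.mem_cons_of_mem _ (hq u h2)

private lemma reach_aux {V : Type*} {G : SimpleGraph V} {v : V} {S : Set {u : V | u ≠ v}}
    {a b : V} (w : G.Walk a b)
    (hv : ∀ u ∈ w.support, u ≠ v)
    (hS : ∀ (u : V) (hu : u ∈ w.support), (⟨u, hv u hu⟩ : {u : V | u ≠ v}) ∉ S) :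
    ((G.induce {u : V | u ≠ v}).induce Sᶜ).Reachable
      ⟨⟨a, hv a w.start_mem_support⟩, hS a w.start_mem_support⟩
      ⟨⟨b, hv b w.end_mem_support⟩, hS b w.end_mem_support⟩ := by
  obtain ⟨q, hq⟩ := walk_induce w (hv a w.start_mem_support) (hv b w.end_mem_support) hv
  obtain ⟨q2, _⟩ := walk_induce q (hS a w.start_mem_support) (hS b w.end_mem_support)
    (fun u hu => by
      have h1 := hq u hu
      have := hS u.val h1
      convert this)
  exact q2.reachable


/-- Paper's Lemma 1: if every pair of distinct neighbors of `v` is joined by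
at least `k` pairwise internally disjoint paths in `G − v`, then `G − v`
is `k`-connected. -/
theorem lemma1 {V : Type*} [Fintype V] (k : ℕ) (hk : 0 < k)
    (G : SimpleGraph V) (hcard : k + 2 ≤ Fintype.card V)
    (hG : KConn G k) (v : V)
    (h : ∀ x y : V, (hx : G.Adj v x) → (hy : G.Adj v y) → x ≠ y →
      HasIDPathFamily (G.induce {u | u ≠ v})
        ⟨x, hx.ne'⟩ ⟨y, hy.ne'⟩ k) :
    KConn (G.induce {u | u ≠ v}) k := by
  classical
  have hVcard : Nat.card {u : V | u ≠ v} = Fintype.card V - 1 := by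
    have he : ({u : V | u ≠ v} : Set V) = Set.univ \ {v} := by
      ext u; simp
    rw [Nat.card_coe_set_eq, he, Set.ncard_diff (Set.subset_univ _) (Set.finite_singleton _)]
    simp [Set.ncard_univ]
  constructor
  · omega
  intro S hSfin hScard
  set T : Set V := Subtype.val '' S with hTdef
  have hTfin : T.Finite := hSfin.image _
  have hTcard : T.ncard < k := by
    rw [hTdef, Set.ncard_image_of_injective _ Subtype.val_injective]; exact hScard
  have hmem : ∀ u : {u : V | u ≠ v}, (u : V) ∈ T ↔ u ∈ S :=
    fun u => Subtype.val_injective.mem_set_image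
  rw [connected_iff]
  constructor
  · -- Preconnected
    intro a b
    have ha3T : (a : {u : V | u ≠ v}).val ∉ T := fun hmemT => a.prop ((hmem _).1 hmemT)
    have hb3T : (b : {u : V | u ≠ v}).val ∉ T := fun hmemT => b.prop ((hmem _).1 hmemT)
    have hconn := hG.2 T hTfin hTcard
    obtain ⟨w0⟩ := hconn.preconnected ⟨(a : {u : V | u ≠ v}).val, ha3T⟩
      ⟨(b : {u : V | u ≠ v}).val, hb3T⟩
    set a3 : V := (a : {u : V | u ≠ v}).val with ha3def
    set b3 : V := (b : {u : V | u ≠ v}).val with hb3def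
    have ha3v : a3 ≠ v := (a : {u : V | u ≠ v}).prop
    have hb3v : b3 ≠ v := (b : {u : V | u ≠ v}).prop
    set w1 := w0.map (outHom G Tᶜ) with hw1def
    set p : G.Walk a3 b3 := (w1.toPath : G.Path a3 b3).val with hpdef
    have hp : p.IsPath := (w1.toPath : G.Path a3 b3).prop
    have hw1T : ∀ u ∈ w1.support, u ∉ T := by
      intro u hu
      rw [hw1def, Walk.support_map] at hu
      obtain ⟨z, _, rfl⟩ := List.mem_map.1 hu
      exact z.prop
    have hpT : ∀ u ∈ p.support, u ∉ T :=
      fun u hu => hw1T u (w1.support_toPath_subset hu)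
    have key : ∀ (w : G.Walk a3 b3), (∀ u ∈ w.support, u ≠ v) →
        (∀ u ∈ w.support, u ∉ T) →
        ((G.induce {u : V | u ≠ v}).induce Sᶜ).Reachable a b := by
      intro w hwv hwT
      have hwS : ∀ (u : V) (hu : u ∈ w.support),
          (⟨u, hwv u hu⟩ : {u : V | u ≠ v}) ∉ S :=
        fun u hu hs => hwT u hu ((hmem ⟨u, hwv u hu⟩).2 hs)
      exact reach_aux w hwv hwS
    by_cases hvp : v ∈ p.support
    · -- the path passes through v; reroute
      set t := p.takeUntil v hvp with htdef
      set d := p.dropUntil v hvp with hddef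
      have htpath : t.IsPath := hp.takeUntil hvp
      have hdpath : d.IsPath := hp.dropUntil hvp
      obtain ⟨x, hx, q1, hq1⟩ := Walk.exists_eq_cons_of_ne (Ne.symm ha3v) t.reverse
      obtain ⟨y, hy, r, hdr⟩ := Walk.exists_eq_cons_of_ne (Ne.symm hb3v) d
      have hq1cons : (Walk.cons hx q1).IsPath := hq1 ▸ htpath.reverse
      have hvq1 : v ∉ q1.support := ((Walk.cons_isPath_iff _ _).1 hq1cons).2
      have hdcons : (Walk.cons hy r).IsPath := hdr ▸ hdpath
      have hvr : v ∉ r.support := ((Walk.cons_isPath_iff _ _).1 hdcons).2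
      have hts : ∀ u, u ∈ t.support ↔ u ∈ v :: q1.support := by
        intro u
        rw [← List.mem_reverse, ← Walk.support_reverse, hq1, Walk.support_cons]
      have hxv : x ≠ v := fun hxe => hvq1 (hxe ▸ q1.start_mem_support)
      have hyv : y ≠ v := fun hye => hvr (hye ▸ r.start_mem_support)
      have hsupp_eq : p.support = t.support ++ d.support.tail := by
        conv_lhs => rw [← p.take_spec hvp]
        rw [Walk.support_append]
      have hxmem : x ∈ t.support := (hts x).2 (List.mem_cons_of_mem _ q1.start_mem_support)
      have hymem : y ∈ d.support.tail := by
        rw [hdr, Walk.support_cons]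
        exact r.start_mem_support
      have hxy : x ≠ y := by
        intro hxe
        have hnd := hp.support_nodup
        rw [hsupp_eq, List.nodup_append] at hnd
        exact hnd.2.2 x hxmem x (hxe ▸ hymem) rfl
      have hxT : x ∉ T := hpT x (p.support_takeUntil_subset hvp hxmem)
      have hyT : y ∉ T := hpT y (p.support_dropUntil_subset hvp (List.mem_of_mem_tail hymem))
      obtain ⟨P, hPinj, hPpath, hPdisj⟩ := h x y hx hy hxy
      have hfree : ∃ i, ∀ u ∈ (P i).support, (u : V) ∉ T := by
        by_contra hcon
        push_neg at hcon
        choose f hf1 hf2 using hcon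
        have hfinj : Function.Injective f := by
          intro i j hij
          by_contra hne
          rcases hPdisj i j hne (f i) (hf1 i) (hij ▸ hf1 j) with h' | h'
          · have := hf2 i; rw [h'] at this; exact hxT this
          · have := hf2 i; rw [h'] at this; exact hyT this
        have hfS : ∀ i, f i ∈ S := fun i => (hmem (f i)).1 (hf2 i)
        haveI : Finite S := hSfin.to_subtype
        have hk2 : k ≤ S.ncard := by
          have hinj2 : Function.Injective (fun i => (⟨f i, hfS i⟩ : S)) := by
            intro i j hij
            exact hfinj (congrArg Subtype.val hij)
          calc k = Nat.card (Fin k) := by simp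
            _ ≤ Nat.card S := Nat.card_le_card_of_injective _ hinj2
            _ = S.ncard := Nat.card_coe_set_eq S
        omega
      obtain ⟨i, hiT⟩ := hfree
      set W2 : G.Walk x y := (P i).map (outHom G {u : V | u ≠ v}) with hW2def
      have hW2 : ∀ u ∈ W2.support, u ≠ v ∧ u ∉ T := by
        intro u hu
        replace hu : u ∈ ((P i).map (outHom G {u : V | u ≠ v})).support := hu
        rw [Walk.support_map] at hu
        obtain ⟨z, hz, rfl⟩ := List.mem_map.1 hu
        exact ⟨z.prop, hiT z hz⟩
      set wfin : G.Walk a3 b3 := q1.reverse.append (W2.append r) with hwfindef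
      have hq1sub : ∀ u ∈ q1.support, u ∈ p.support := fun u hu =>
        p.support_takeUntil_subset hvp ((hts u).2 (List.mem_cons_of_mem _ hu))
      have hrsub : ∀ u ∈ r.support, u ∈ p.support := fun u hu =>
        p.support_dropUntil_subset hvp (by
          rw [show p.dropUntil v hvp = Walk.cons hy r from hdr, Walk.support_cons]
          exact List.mem_cons_of_mem _ hu)
      have hwfin : ∀ u ∈ wfin.support, u ≠ v ∧ u ∉ T := by
        intro u hu
        rw [hwfindef, Walk.mem_support_append_iff, Walk.mem_support_append_iff,
          Walk.support_reverse, List.mem_reverse] at hu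
        rcases hu with hu | hu | hu
        · exact ⟨fun he => hvq1 (he ▸ hu), hpT u (hq1sub u hu)⟩
        · exact hW2 u hu
        · exact ⟨fun he => hvr (he ▸ hu), hpT u (hrsub u hu)⟩
      exact key wfin (fun u hu => (hwfin u hu).1) (fun u hu => (hwfin u hu).2)
    · exact key p (fun u hu huv => hvp (huv ▸ hu)) hpT
  · -- Nonempty
    have hne : S ≠ Set.univ := by
      intro hSu
      rw [hSu, Set.ncard_univ] at hScard
      omega
    obtain ⟨u, hu⟩ := Set.ne_univ_iff_exists_notMem S |>.1 hne
    exact ⟨⟨u, hu⟩⟩
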